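/- Let H be a 3-dimensional complex inner product space with orthonormal basis {e₀, e₁, e₂}, and let Ψ = (1/√3)·(proj(e₀) + proj(e₁) − proj(e₂)), where proj(v) is the orthogonal projection onto the span of v. With e₋ = (e₀−e₁)/√2 and e₋ᵢ = (e₀−i·e₁)/√2, define Q₁ = proj(e₁) + proj(e₂), Q₂ = proj(e₀) + proj(e₂), Q₃ = proj(e₋) + proj(e₂), Q₄ = proj(e₋ᵢ) + proj(e₂). Then Tr(Q_i ∘ Ψ) = 0 for all i ∈ {1,2,3,4}, while Tr(proj(e₀) ∘ Ψ) = 1/√3 ≠ 0. In particular, Ψ forms a story with the measurement {proj(e₀), Q₁} and assigns Aharonov–Bergmann–Lebowitz probability zero to the outcome corresponding to Q_i in each of the four measurements {proj(e₀), Q₁}, {proj(e₁), Q₂}, {proj((e₀+e₁)/√2), Q₃}, {proj((e₀+i·e₁)/√2), Q₄}. -/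

import Mathlib

open scoped InnerProductSpace

/-- The orthogonal projection onto the span of `v`, as a linear operator on `E`. -/
noncomputable def projSpan {E : Type*} [NormedAddCommGroup E] [InnerProductSpace ℂ E]
    [FiniteDimensional ℂ E] (v : E) : E →ₗ[ℂ] E :=
  (ℂ ∙ v).subtype ∘ₗ ((ℂ ∙ v).orthogonalProjectionOnto).toLinearMap

/-- The non-separable two-state vector `Ψ = (|0⟩⟨0| + |1⟩⟨1| − |2⟩⟨2|)/√3`. -/
noncomputable def psiOp {E : Type*} [NormedAddCommGroup E] [InnerProductSpace ℂ E]
    [FiniteDimensional ℂ E] (e : OrthonormalBasis (Fin 3) ℂ E) : E →ₗ[ℂ] E :=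
  (Real.sqrt 3 : ℂ)⁻¹ • (projSpan (e 0) + projSpan (e 1) - projSpan (e 2))

/-- The first elements `proj(e₀), proj(e₁), proj(e₊), proj(e₊ᵢ)` of the four
measurements. -/
noncomputable def firstProj {E : Type*} [NormedAddCommGroup E] [InnerProductSpace ℂ E]
    [FiniteDimensional ℂ E] (e : OrthonormalBasis (Fin 3) ℂ E) :
    Fin 4 → E →ₗ[ℂ] E :=
  ![projSpan (e 0), projSpan (e 1),
    projSpan ((Real.sqrt 2 : ℂ)⁻¹ • (e 0 + e 1)),
    projSpan ((Real.sqrt 2 : ℂ)⁻¹ • (e 0 + Complex.I • e 1))]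

/-- The second elements `Q₁ = proj(e₁)+proj(e₂), Q₂ = proj(e₀)+proj(e₂),
`Q₃ = proj(e₋)+proj(e₂), Q₄ = proj(e₋ᵢ)+proj(e₂)` of the four measurements. -/
noncomputable def secondProj {E : Type*} [NormedAddCommGroup E] [InnerProductSpace ℂ E]
    [FiniteDimensional ℂ E] (e : OrthonormalBasis (Fin 3) ℂ E) :
    Fin 4 → E →ₗ[ℂ] E :=
  ![projSpan (e 1) + projSpan (e 2),
    projSpan (e 0) + projSpan (e 2),
    projSpan ((Real.sqrt 2 : ℂ)⁻¹ • (e 0 - e 1)) + projSpan (e 2),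
    projSpan ((Real.sqrt 2 : ℂ)⁻¹ • (e 0 - Complex.I • e 1)) + projSpan (e 2)]

lemma projSpan_apply {E : Type*} [NormedAddCommGroup E] [InnerProductSpace ℂ E]
    [FiniteDimensional ℂ E] (v x : E) :
    projSpan v x = (⟪v, x⟫_ℂ / ⟪v, v⟫_ℂ) • v := by
  simp [projSpan, ← Submodule.starProjection_apply, Submodule.starProjection_singleton, inner_self_eq_norm_sq_to_K]

lemma trace_eq_sum_inner' {E : Type*} [NormedAddCommGroup E] [InnerProductSpace ℂ E]
    [FiniteDimensional ℂ E] (e : OrthonormalBasis (Fin 3) ℂ E) (f : E →ₗ[ℂ] E) :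
    LinearMap.trace ℂ E f = ∑ i, ⟪e i, f (e i)⟫_ℂ := by
  rw [LinearMap.trace_eq_matrix_trace ℂ e.toBasis, Matrix.trace]
  simp [LinearMap.toMatrix_apply, Matrix.diag, OrthonormalBasis.coe_toBasis,
    OrthonormalBasis.coe_toBasis_repr_apply, OrthonormalBasis.repr_apply_apply]

/-- The two-state vector `Ψ = (|0⟩⟨0| + |1⟩⟨1| − |2⟩⟨2|)/√3` has vanishing trace
against each `Qᵢ` and trace `1/√3 ≠ 0` against `proj(e₀)`; hence it forms a story with
the measurement `{proj(e₀), Q₁}` and assigns Aharonov–Bergmann–Lebowitz probability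
zero to the outcome `Qᵢ` in each of the four measurements. -/
theorem stmt16 {E : Type*} [NormedAddCommGroup E] [InnerProductSpace ℂ E]
    [FiniteDimensional ℂ E] (hdim : Module.finrank ℂ E = 3)
    (e : OrthonormalBasis (Fin 3) ℂ E) :
    (∀ k : Fin 4, LinearMap.trace ℂ E (secondProj e k ∘ₗ psiOp e) = 0) ∧
    LinearMap.trace ℂ E (projSpan (e 0) ∘ₗ psiOp e) = (Real.sqrt 3 : ℂ)⁻¹ ∧
    LinearMap.trace ℂ E (projSpan (e 0) ∘ₗ psiOp e) ≠ 0 ∧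
    (LinearMap.trace ℂ E (projSpan (e 0) ∘ₗ psiOp e) ≠ 0 ∨
      LinearMap.trace ℂ E (secondProj e 0 ∘ₗ psiOp e) ≠ 0) ∧
    (∀ k : Fin 4,
      ‖LinearMap.trace ℂ E (secondProj e k ∘ₗ psiOp e)‖ ^ 2 /
        (‖LinearMap.trace ℂ E (firstProj e k ∘ₗ psiOp e)‖ ^ 2 +
         ‖LinearMap.trace ℂ E (secondProj e k ∘ₗ psiOp e)‖ ^ 2) = 0) := by
  have h := e.orthonormal
  rw [orthonormal_iff_ite] at h
  have h2 : (Real.sqrt 2 : ℂ) * (Real.sqrt 2 : ℂ) = 2 := by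
    norm_cast; exact Real.mul_self_sqrt (by norm_num)
  have h2' : (Real.sqrt 2 : ℂ) ≠ 0 := by
    intro hc; rw [hc, mul_zero] at h2; norm_num at h2
  have h3 : (Real.sqrt 3 : ℂ) ≠ 0 := by
    norm_cast
    exact ne_of_gt (Real.sqrt_pos.mpr (by norm_num))
  have hden : ((Real.sqrt 2:ℂ))⁻¹ * ((Real.sqrt 2:ℂ))⁻¹ -
      ((Real.sqrt 2:ℂ))⁻¹ * Complex.I * (((Real.sqrt 2:ℂ))⁻¹ * Complex.I) = 1 := by
    field_simp
    linear_combination -h2 - Complex.I_sq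
  have hP : LinearMap.trace ℂ E (projSpan (e 0) ∘ₗ psiOp e) = (Real.sqrt 3 : ℂ)⁻¹ := by
    rw [trace_eq_sum_inner' e, Fin.sum_univ_three]
    simp only [psiOp, LinearMap.comp_apply,
      LinearMap.smul_apply, LinearMap.add_apply, LinearMap.sub_apply, projSpan_apply,
      inner_add_left, inner_add_right, inner_sub_left, inner_sub_right,
      inner_smul_left, inner_smul_right, smul_add, smul_sub, smul_smul, map_add, map_sub,
      map_smul, h, Complex.conj_ofReal, map_inv₀, Complex.conj_I]
    norm_num [Fin.ext_iff]
  have hQ0 : LinearMap.trace ℂ E (secondProj e 0 ∘ₗ psiOp e) = 0 := by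
    rw [trace_eq_sum_inner' e, Fin.sum_univ_three]
    simp only [secondProj, psiOp, LinearMap.comp_apply,
      LinearMap.smul_apply, LinearMap.add_apply, LinearMap.sub_apply, projSpan_apply,
      inner_add_left, inner_add_right, inner_sub_left, inner_sub_right,
      inner_smul_left, inner_smul_right, smul_add, smul_sub, smul_smul, map_add, map_sub,
      map_smul, h, Complex.conj_ofReal, map_inv₀, Complex.conj_I, Matrix.cons_val_three,
      Matrix.cons_val_zero, Matrix.cons_val_one, Matrix.head_cons, Matrix.tail_cons,
      Matrix.cons_val_two]
    norm_num [Fin.ext_iff, hden]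
  have hQ1 : LinearMap.trace ℂ E (secondProj e 1 ∘ₗ psiOp e) = 0 := by
    rw [trace_eq_sum_inner' e, Fin.sum_univ_three]
    simp only [secondProj, psiOp, LinearMap.comp_apply,
      LinearMap.smul_apply, LinearMap.add_apply, LinearMap.sub_apply, projSpan_apply,
      inner_add_left, inner_add_right, inner_sub_left, inner_sub_right,
      inner_smul_left, inner_smul_right, smul_add, smul_sub, smul_smul, map_add, map_sub,
      map_smul, h, Complex.conj_ofReal, map_inv₀, Complex.conj_I, Matrix.cons_val_three,
      Matrix.cons_val_zero, Matrix.cons_val_one, Matrix.head_cons, Matrix.tail_cons,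
      Matrix.cons_val_two]
    norm_num [Fin.ext_iff, hden]
  have hQ2 : LinearMap.trace ℂ E (secondProj e 2 ∘ₗ psiOp e) = 0 := by
    rw [trace_eq_sum_inner' e, Fin.sum_univ_three]
    simp only [secondProj, psiOp, LinearMap.comp_apply,
      LinearMap.smul_apply, LinearMap.add_apply, LinearMap.sub_apply, projSpan_apply,
      inner_add_left, inner_add_right, inner_sub_left, inner_sub_right,
      inner_smul_left, inner_smul_right, smul_add, smul_sub, smul_smul, map_add, map_sub,
      map_smul, h, Complex.conj_ofReal, map_inv₀, Complex.conj_I, Matrix.cons_val_three,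
      Matrix.cons_val_zero, Matrix.cons_val_one, Matrix.head_cons, Matrix.tail_cons,
      Matrix.cons_val_two]
    norm_num [Fin.ext_iff, hden]
    ring_nf
    field_simp
    ring
  have hQ3 : LinearMap.trace ℂ E (secondProj e 3 ∘ₗ psiOp e) = 0 := by
    rw [trace_eq_sum_inner' e, Fin.sum_univ_three]
    simp only [secondProj, psiOp, LinearMap.comp_apply,
      LinearMap.smul_apply, LinearMap.add_apply, LinearMap.sub_apply, projSpan_apply,
      inner_add_left, inner_add_right, inner_sub_left, inner_sub_right,
      inner_smul_left, inner_smul_right, smul_add, smul_sub, smul_smul, map_add, map_sub,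
      map_smul, h, Complex.conj_ofReal, map_inv₀, Complex.conj_I, Matrix.cons_val_three,
      Matrix.cons_val_zero, Matrix.cons_val_one, Matrix.head_cons, Matrix.tail_cons,
      Matrix.cons_val_two]
    norm_num [Fin.ext_iff, hden]
    ring_nf
    rw [Complex.I_sq]
    field_simp
    linear_combination -h2
  have hQ : ∀ k : Fin 4, LinearMap.trace ℂ E (secondProj e k ∘ₗ psiOp e) = 0 := by
    intro k
    fin_cases k
    · exact hQ0
    · exact hQ1
    · exact hQ2
    · exact hQ3
  refine ⟨hQ, hP, ?_, ?_, ?_⟩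
  · rw [hP]; exact inv_ne_zero h3
  · left; rw [hP]; exact inv_ne_zero h3
  · intro k
    rw [hQ k]
    simp
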